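/- In the PP2DNF coding of a connected bipartite graph H relative to I_{e,Π} and n ≥ 1: if ω is a bad possible world of H (no kept a ∈ A' adjacent to a kept b ∈ B'), then the possible world φ(ω) of the coding has a homomorphism to the iterate I^{3n−1}_{e,Π}. -/

import Mathlib

noncomputable section
open scoped Classical

/-- An instance over an arity-two signature `σ` with domain elements from `V`:
a finite set of facts `R(a,b)`. -/
abbrev Inst (σ V : Type) := Finset (σ × V × V)

namespace PQE

variable {σ V W : Type}

/-- The domain (active domain) of an instance. -/
def domI (I : Inst σ V) : Finset V :=
  I.image (fun f => f.2.1) ∪ I.image (fun f => f.2.2)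

/-- `h` is a homomorphism from `I` to `J`. -/
def IsHom (h : V → W) (I : Inst σ V) (J : Inst σ W) : Prop :=
  ∀ R a b, (R, a, b) ∈ I → (R, h a, h b) ∈ J

/-- `{u,v}` is an (undirected, Gaifman-graph) edge of `I`. -/
def IsEdge (I : Inst σ V) (u v : V) : Prop :=
  u ≠ v ∧ ∃ R, (R, u, v) ∈ I ∨ (R, v, u) ∈ I

/-- `u` is a leaf: it occurs in exactly one undirected edge. -/
def IsLeaf (I : Inst σ V) (u : V) : Prop := ∃! w, IsEdge I u w

/-- `(u,v)` is a non-leaf edge: an edge neither of whose endpoints is a leaf. -/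
def NonLeafEdge (I : Inst σ V) (u v : V) : Prop :=
  IsEdge I u v ∧ ¬ IsLeaf I u ∧ ¬ IsLeaf I v

/-- Rename the elements of a fact along `h`. -/
def rena (h : V → W) : σ × V × V → σ × W × W := fun f => (f.1, h f.2.1, h f.2.2)

/-- Substitution sending `u ↦ x`, `v ↦ y` and any other element `a ↦ emb a`. -/
def sb (u v : V) (x y : W) (emb : V → W) : V → W :=
  fun a => if a = u then x else if a = v then y else emb a

/-- The fact `f` is covered by the edge `{u,v}`: its domain is `⊆ {u,v}`. -/
def Covered (u v : V) (f : σ × V × V) : Prop :=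
  (f.2.1 = u ∨ f.2.1 = v) ∧ (f.2.2 = u ∨ f.2.2 = v)

/-- The fact `f` mentions neither `u` nor `v`. -/
def NotUV (u v : V) (f : σ × V × V) : Prop :=
  f.2.1 ≠ u ∧ f.2.1 ≠ v ∧ f.2.2 ≠ u ∧ f.2.2 ≠ v

/-- `f` is left-incident to the directed edge `(u,v)`: as a `σ↔`-fact it has the form
`R_L(l,u)` with `l ∉ {u,v}`. -/
def LeftInc (u v : V) (f : σ × V × V) : Prop :=
  (f.2.1 = u ∧ f.2.2 ≠ u ∧ f.2.2 ≠ v) ∨ (f.2.2 = u ∧ f.2.1 ≠ u ∧ f.2.1 ≠ v)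

/-- `f` is right-incident to the directed edge `(u,v)`: as a `σ↔`-fact it has the form
`R_R(v,r)` with `r ∉ {u,v}`. -/
def RightInc (u v : V) (f : σ × V × V) : Prop :=
  (f.2.1 = v ∧ f.2.2 ≠ u ∧ f.2.2 ≠ v) ∨ (f.2.2 = v ∧ f.2.1 ≠ u ∧ f.2.1 ≠ v)

/-- Copy the edge `(u,v)` of `I` onto the pair `(x,y)` (all facts covered by `(u,v)`,
renamed by `u ↦ x`, `v ↦ y`, other elements embedded by `emb`). -/
def copyEdge (I : Inst σ V) (u v : V) (x y : W) (emb : V → W) : Inst σ W :=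
  (I.filter (Covered u v)).image (rena (sb u v x y emb))

/-- `(FL, FR)` is an incident pair of the edge `(u,v)` in `I`. -/
def IncidentPair (I : Inst σ V) (u v : V) (FL FR : σ × V × V) : Prop :=
  FL ∈ I ∧ LeftInc u v FL ∧ FR ∈ I ∧ RightInc u v FR

end PQE

namespace PQE

variable {σ V : Type}

/-- The `n`-th iterate `I^n_{e,Π}` of the non-leaf edge `e = (u,v)` in `I` relative to the
incident pair `Π = (FL, FR)`.  The fresh elements are `u_i = Sum.inr (false, i)` and
`v_i = Sum.inr (true, i)` (for `1 ≤ i ≤ n`); the remaining elements of `I` are embedded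
via `Sum.inl`.  The edge `e` is replaced by a back-and-forth path of `2n-1` copies of `e`,
`FL` is kept at `u_1` and `FR` at `v_n`, and all other left-incident (resp. right-incident)
facts are copied onto every `u_i` (resp. every `v_i`). -/
def iter (I : Inst σ V) (u v : V) (FL FR : σ × V × V) (n : ℕ) :
    Inst σ (V ⊕ Bool × ℕ) :=
  let uu : ℕ → V ⊕ Bool × ℕ := fun i => Sum.inr (false, i)
  let vv : ℕ → V ⊕ Bool × ℕ := fun i => Sum.inr (true, i)
  (I.filter (NotUV u v)).image (rena Sum.inl)
  ∪ {rena (sb u v (uu 1) (vv n) Sum.inl) FL, rena (sb u v (uu 1) (vv n) Sum.inl) FR}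
  ∪ (Finset.range n).biUnion (fun i =>
      (I.filter (fun f => LeftInc u v f ∧ f ≠ FL)).image
        (rena (sb u v (uu (i+1)) (vv n) Sum.inl)))
  ∪ (Finset.range n).biUnion (fun i =>
      (I.filter (fun f => RightInc u v f ∧ f ≠ FR)).image
        (rena (sb u v (uu 1) (vv (i+1)) Sum.inl)))
  ∪ (Finset.range n).biUnion (fun i => copyEdge I u v (uu (i+1)) (vv (i+1)) Sum.inl)
  ∪ (Finset.range (n-1)).biUnion (fun i => copyEdge I u v (uu (i+2)) (vv (i+1)) Sum.inl)

end PQE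

namespace PQE

/-- Vertex type for the PP2DNF coding: original elements, the vertices `u_a` (`a ∈ A`),
the vertices `v_b` (`b ∈ B`), and the inner path copies `u_{c,i}`, `v_{c,i}`. -/
abbrev CWt (V α β : Type) := V ⊕ (α ⊕ (β ⊕ ((α × β) × Bool × ℕ)))

variable {σ : Type}

/-- The vertex `u_a`. -/
def cwUA (V α β : Type) (a : α) : CWt V α β := Sum.inr (Sum.inl a)

/-- The vertex `v_b`. -/
def cwVB (V α β : Type) (b : β) : CWt V α β := Sum.inr (Sum.inr (Sum.inl b))

/-- The vertex `u_{c,i}` (with `u_{c,1} = u_a` for `c = (a,b)`). -/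
def cwU (V α β : Type) (n : ℕ) (c : α × β) (i : ℕ) : CWt V α β :=
  if i = 1 then cwUA V α β c.1 else Sum.inr (Sum.inr (Sum.inr (c, false, i)))

/-- The vertex `v_{c,i}` (with `v_{c,n} = v_b` for `c = (a,b)`). -/
def cwV (V α β : Type) (n : ℕ) (c : α × β) (i : ℕ) : CWt V α β :=
  if i = n then cwVB V α β c.2 else Sum.inr (Sum.inr (Sum.inr (c, true, i)))

/-- The possible world `φ(ω)` of the PP2DNF coding of the bipartite graph `(A,B,C)`
relative to `I`, edge `(u,v)`, incident pair `(FL,FR)` and parameter `n`, for the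
possible world `ω = (A', B')`: the copy of `FL` at `u_a` is kept iff `a ∈ A'`, and the
copy of `FR` at `v_b` is kept iff `b ∈ B'`; all other facts of the coding are present.
(The full coding is recovered with `A' = A`, `B' = B`.) -/
def ppCoding {V α β : Type} (I : Inst σ V) (u v : V) (FL FR : σ × V × V) (n : ℕ)
    (A : Finset α) (B : Finset β) (C : Finset (α × β))
    (A' : Finset α) (B' : Finset β) : Inst σ (CWt V α β) :=
  (I.filter (NotUV u v)).image (rena Sum.inl)
  ∪ A'.image (fun a => rena (sb u v (cwUA V α β a) (cwUA V α β a) Sum.inl) FL)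
  ∪ B'.image (fun b => rena (sb u v (cwVB V α β b) (cwVB V α β b) Sum.inl) FR)
  ∪ A.biUnion (fun a =>
      (I.filter (fun f => LeftInc u v f ∧ f ≠ FL)).image
        (rena (sb u v (cwUA V α β a) (cwUA V α β a) Sum.inl)))
  ∪ C.biUnion (fun c => (Finset.Icc 2 n).biUnion (fun i =>
      (I.filter (fun f => LeftInc u v f ∧ f ≠ FL)).image
        (rena (sb u v (cwU V α β n c i) (cwU V α β n c i) Sum.inl))))
  ∪ B.biUnion (fun b =>
      (I.filter (fun f => RightInc u v f ∧ f ≠ FR)).image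
        (rena (sb u v (cwVB V α β b) (cwVB V α β b) Sum.inl)))
  ∪ C.biUnion (fun c => (Finset.Icc 1 (n-1)).biUnion (fun i =>
      (I.filter (fun f => RightInc u v f ∧ f ≠ FR)).image
        (rena (sb u v (cwV V α β n c i) (cwV V α β n c i) Sum.inl))))
  ∪ C.biUnion (fun c => (Finset.Icc 1 n).biUnion (fun i =>
      copyEdge I u v (cwU V α β n c i) (cwV V α β n c i) Sum.inl))
  ∪ C.biUnion (fun c => (Finset.Icc 1 (n-1)).biUnion (fun i =>
      copyEdge I u v (cwU V α β n c (i+1)) (cwV V α β n c i) Sum.inl))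

/-- Adjacency on the vertices `α ⊕ β` of the bipartite graph with edge set `C`. -/
def BipAdj {α β : Type} (C : Finset (α × β)) : (α ⊕ β) → (α ⊕ β) → Prop := fun x y =>
  ∃ c ∈ C, (x = Sum.inl c.1 ∧ y = Sum.inr c.2) ∨ (x = Sum.inr c.2 ∧ y = Sum.inl c.1)

/-- The bipartite graph `(A,B,C)` is connected. -/
def BipConn {α β : Type} (A : Finset α) (B : Finset β) (C : Finset (α × β)) : Prop :=
  ∀ x ∈ (A.image (Sum.inl : α → α ⊕ β) ∪ B.image Sum.inr),
  ∀ y ∈ (A.image (Sum.inl : α → α ⊕ β) ∪ B.image Sum.inr),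
    Relation.ReflTransGen (BipAdj C) x y

end PQE

open PQE

/-! Each encoded path `u_a = u_{c,1}, v_{c,1}, u_{c,2}, …, v_{c,n} = v_b` is folded onto the path
`U_1, V_1, U_2, …, V_{3n-1}` of the iterate.  A path whose `u_a` is kept goes identically onto
the first `2n-1` edges; one whose `v_b` is kept is shifted onto the last `2n-1` edges; any other
path is laid backwards onto the middle, from `U_{2n}` to `V_n`.  So every discarded `u_a` lands
on `U_{2n}` and every discarded `v_b` on `V_n`, consistently across paths: badness is exactly
what makes a path with a kept `u_a` end at a discarded `v_b`.  Only `U_1` and `V_{3n-1}` carry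
`F_L` and `F_R`, and only kept endpoints reach them. -/

namespace PQE

section Renaming

variable {σ V W X : Type}

theorem isHom_iff_forall_rena_mem (h : V → W) (I : Inst σ V) (J : Inst σ W) :
    IsHom h I J ↔ ∀ f ∈ I, rena h f ∈ J :=
  ⟨fun hIJ f hf => hIJ f.1 f.2.1 f.2.2 hf, fun hIJ R a b hf => hIJ (R, a, b) hf⟩

theorem rena_rena_sb (h : W → X) (u v : V) (x y : W) (e : V → W) (f : σ × V × V) :
    rena h (rena (sb u v x y e) f) = rena (sb u v (h x) (h y) (h ∘ e)) f := by
  simp only [rena, sb, Function.comp_apply]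
  split_ifs <;> rfl

theorem rena_mem_copyEdge (h : W → X) {I : Inst σ V} {u v : V} {x y : W} {e : V → W}
    {g : σ × W × W} (hg : g ∈ copyEdge I u v x y e) :
    rena h g ∈ copyEdge I u v (h x) (h y) (h ∘ e) := by
  obtain ⟨f, hf, rfl⟩ := Finset.mem_image.1 hg
  exact Finset.mem_image.2 ⟨f, hf, (rena_rena_sb h u v x y e f).symm⟩

theorem rena_sb_of_leftInc {u v : V} {f : σ × V × V} (hf : LeftInc u v f)
    (x y y' : W) (e : V → W) :
    rena (sb u v x y e) f = rena (sb u v x y' e) f := by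
  obtain ⟨R, p, q⟩ := f
  rcases hf with ⟨h1, h2, h3⟩ | ⟨h1, h2, h3⟩ <;> simp_all [rena, sb]

theorem rena_sb_of_rightInc {u v : V} (huv : u ≠ v) {f : σ × V × V} (hf : RightInc u v f)
    (x x' y : W) (e : V → W) :
    rena (sb u v x y e) f = rena (sb u v x' y e) f := by
  obtain ⟨R, p, q⟩ := f
  rcases hf with ⟨rfl, h2, h3⟩ | ⟨rfl, h2, h3⟩ <;> simp_all [rena, sb, huv.symm]

end Renaming

section Iterate

/-- `U_j V_k` is one of the `2m-1` copies of `e` on the path of `I^m_{e,Π}`. -/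
def IsPathEdge (m j k : ℕ) : Prop :=
  1 ≤ k ∧ (j = k ∧ k ≤ m ∨ j = k + 1 ∧ k + 1 ≤ m)

theorem IsPathEdge.bounds {m j k : ℕ} (hjk : IsPathEdge m j k) :
    (1 ≤ j ∧ j ≤ m) ∧ (1 ≤ k ∧ k ≤ m) := by
  unfold IsPathEdge at hjk
  omega

variable {σ V : Type} {I : Inst σ V} {u v : V} {FL FR : σ × V × V} {m : ℕ}

theorem rena_inl_mem_iter {f : σ × V × V} (hf : f ∈ I) (hfuv : NotUV u v f) :
    rena Sum.inl f ∈ iter I u v FL FR m := by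
  simp only [iter, Finset.mem_union]
  exact Or.inl <| Or.inl <| Or.inl <| Or.inl <| Or.inl <|
    Finset.mem_image_of_mem _ (Finset.mem_filter.2 ⟨hf, hfuv⟩)

theorem rena_sb_FL_mem_iter (hFL : LeftInc u v FL) (y : V ⊕ Bool × ℕ) :
    rena (sb u v (Sum.inr (false, 1)) y Sum.inl) FL ∈ iter I u v FL FR m := by
  rw [rena_sb_of_leftInc hFL _ y (Sum.inr (true, m))]
  simp [iter]

theorem rena_sb_FR_mem_iter (huv : u ≠ v) (hFR : RightInc u v FR) (x : V ⊕ Bool × ℕ) :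
    rena (sb u v x (Sum.inr (true, m)) Sum.inl) FR ∈ iter I u v FL FR m := by
  rw [rena_sb_of_rightInc huv hFR x (Sum.inr (false, 1))]
  simp [iter]

theorem rena_sb_mem_iter_of_leftInc {f : σ × V × V} (hf : f ∈ I) (hfL : LeftInc u v f)
    (hfFL : f ≠ FL) {j : ℕ} (hj : 1 ≤ j ∧ j ≤ m) (y : V ⊕ Bool × ℕ) :
    rena (sb u v (Sum.inr (false, j)) y Sum.inl) f ∈ iter I u v FL FR m := by
  rw [rena_sb_of_leftInc hfL _ y (Sum.inr (true, m))]
  simp only [iter, Finset.mem_union, Finset.mem_biUnion, Finset.mem_range, Finset.mem_image,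
    Finset.mem_filter]
  refine Or.inl <| Or.inl <| Or.inl <| Or.inr ⟨j - 1, by omega, f, ⟨hf, hfL, hfFL⟩, ?_⟩
  rw [Nat.sub_add_cancel hj.1]

theorem rena_sb_mem_iter_of_rightInc (huv : u ≠ v) {f : σ × V × V} (hf : f ∈ I)
    (hfR : RightInc u v f) (hfFR : f ≠ FR) {k : ℕ} (hk : 1 ≤ k ∧ k ≤ m)
    (x : V ⊕ Bool × ℕ) :
    rena (sb u v x (Sum.inr (true, k)) Sum.inl) f ∈ iter I u v FL FR m := by
  rw [rena_sb_of_rightInc huv hfR x (Sum.inr (false, 1))]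
  simp only [iter, Finset.mem_union, Finset.mem_biUnion, Finset.mem_range, Finset.mem_image,
    Finset.mem_filter]
  refine Or.inl <| Or.inl <| Or.inr ⟨k - 1, by omega, f, ⟨hf, hfR, hfFR⟩, ?_⟩
  rw [Nat.sub_add_cancel hk.1]

theorem copyEdge_subset_iter {j k : ℕ} (hjk : IsPathEdge m j k) :
    copyEdge I u v (Sum.inr (false, j)) (Sum.inr (true, k)) Sum.inl ⊆ iter I u v FL FR m := by
  intro g hg
  simp only [iter, Finset.mem_union, Finset.mem_biUnion, Finset.mem_range]
  obtain ⟨hk, ⟨hj, hkm⟩ | ⟨hj, hkm⟩⟩ := hjk <;> subst j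
  · refine Or.inl <| Or.inr ⟨k - 1, by omega, ?_⟩
    rwa [Nat.sub_add_cancel hk]
  · refine Or.inr ⟨k - 1, by omega, ?_⟩
    rwa [show k - 1 + 2 = k + 1 by omega, Nat.sub_add_cancel hk]

end Iterate

section Folding

variable {V α β : Type} (n : ℕ) (A' : Finset α) (B' : Finset β)

/-- `u_{c,i} ↦ U_{foldU c i}` -/
def foldU (c : α × β) (i : ℕ) : ℕ :=
  if c.1 ∈ A' then i else if c.2 ∈ B' then 2 * n - 1 + i else 2 * n + 1 - i

/-- `v_{c,i} ↦ V_{foldV c i}` -/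
def foldV (c : α × β) (i : ℕ) : ℕ :=
  if c.1 ∈ A' then i else if c.2 ∈ B' then 2 * n - 1 + i else 2 * n - i

def foldHom : CWt V α β → V ⊕ Bool × ℕ
  | Sum.inl x => Sum.inl x
  | Sum.inr (Sum.inl a) => Sum.inr (false, if a ∈ A' then 1 else 2 * n)
  | Sum.inr (Sum.inr (Sum.inl b)) => Sum.inr (true, if b ∈ B' then 3 * n - 1 else n)
  | Sum.inr (Sum.inr (Sum.inr (c, false, i))) => Sum.inr (false, foldU n A' B' c i)
  | Sum.inr (Sum.inr (Sum.inr (c, true, i))) => Sum.inr (true, foldV n A' B' c i)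

variable {n A' B'}

theorem foldHom_comp_inl : (foldHom (V := V) n A' B' ∘ Sum.inl) = Sum.inl := rfl

theorem foldHom_cwUA (a : α) :
    foldHom n A' B' (cwUA V α β a) = Sum.inr (false, if a ∈ A' then 1 else 2 * n) := rfl

theorem foldHom_cwVB (b : β) :
    foldHom n A' B' (cwVB V α β b) = Sum.inr (true, if b ∈ B' then 3 * n - 1 else n) := rfl

theorem foldHom_cwU (hn : 1 ≤ n) (c : α × β) (i : ℕ) :
    foldHom n A' B' (cwU V α β n c i) = Sum.inr (false, foldU n A' B' c i) := by
  unfold cwU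
  split_ifs with hi
  · simp only [foldHom_cwUA, foldU, hi, Sum.inr.injEq, Prod.mk.injEq, true_and]
    split_ifs <;> omega
  · rfl

theorem foldHom_cwV {c : α × β} (hc : ¬(c.1 ∈ A' ∧ c.2 ∈ B')) (i : ℕ) :
    foldHom n A' B' (cwV V α β n c i) = Sum.inr (true, foldV n A' B' c i) := by
  unfold cwV
  split_ifs with hi
  · simp only [foldHom_cwVB, foldV, hi, Sum.inr.injEq, Prod.mk.injEq, true_and]
    split_ifs <;> simp_all <;> omega
  · rfl

theorem isPathEdge_foldU_foldV (c : α × β) {i : ℕ} (hi : 1 ≤ i ∧ i ≤ n) :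
    IsPathEdge (3 * n - 1) (foldU n A' B' c i) (foldV n A' B' c i) := by
  unfold IsPathEdge foldU foldV
  split_ifs <;> omega

theorem isPathEdge_foldU_succ_foldV (c : α × β) {i : ℕ} (hi : 1 ≤ i ∧ i ≤ n - 1) :
    IsPathEdge (3 * n - 1) (foldU n A' B' c (i + 1)) (foldV n A' B' c i) := by
  unfold IsPathEdge foldU foldV
  split_ifs <;> omega

end Folding

end PQE

theorem ppCoding_bad_world_hom_to_iterate_general {σ V α β : Type}
    (I : Inst σ V) (u v : V) (FL FR : σ × V × V)
    (hE : NonLeafEdge I u v) (hPi : IncidentPair I u v FL FR)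
    (n : ℕ) (hn : 1 ≤ n)
    (A : Finset α) (B : Finset β) (C : Finset (α × β))
    (A' : Finset α) (B' : Finset β)
    (hbad : ∀ a ∈ A', ∀ b ∈ B', (a, b) ∉ C) :
    ∃ h : CWt V α β → (V ⊕ Bool × ℕ),
      IsHom h (ppCoding I u v FL FR n A B C A' B') (iter I u v FL FR (3 * n - 1)) := by
  obtain ⟨⟨huv, -⟩, -, -⟩ := hE
  obtain ⟨-, hFL, -, hFR⟩ := hPi
  have hgood : ∀ c ∈ C, ¬(c.1 ∈ A' ∧ c.2 ∈ B') := fun c hc hAB => hbad _ hAB.1 _ hAB.2 hc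
  refine ⟨foldHom n A' B', (isHom_iff_forall_rena_mem _ _ _).2 fun f hf => ?_⟩
  simp only [ppCoding, Finset.mem_union, Finset.mem_image, Finset.mem_biUnion,
    Finset.mem_filter, Finset.mem_Icc] at hf
  rcases hf with (((((((⟨f, ⟨hf, hfuv⟩, rfl⟩ | ⟨a, ha, rfl⟩) | ⟨b, hb, rfl⟩) |
      ⟨a, -, f, ⟨hf, hfL, hfFL⟩, rfl⟩) | ⟨c, -, i, hi, f, ⟨hf, hfL, hfFL⟩, rfl⟩) |
      ⟨b, -, f, ⟨hf, hfR, hfFR⟩, rfl⟩) | ⟨c, hc, i, hi, f, ⟨hf, hfR, hfFR⟩, rfl⟩) |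
      ⟨c, hc, i, hi, hg⟩) | ⟨c, hc, i, hi, hg⟩
  · exact rena_inl_mem_iter hf hfuv
  · rw [rena_rena_sb, foldHom_cwUA, if_pos ha, foldHom_comp_inl]
    exact rena_sb_FL_mem_iter hFL _
  · rw [rena_rena_sb, foldHom_cwVB, if_pos hb, foldHom_comp_inl]
    exact rena_sb_FR_mem_iter huv hFR _
  · rw [rena_rena_sb, foldHom_cwUA, foldHom_comp_inl]
    exact rena_sb_mem_iter_of_leftInc hf hfL hfFL (by split_ifs <;> omega) _
  · rw [rena_rena_sb, foldHom_cwU hn, foldHom_comp_inl]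
    exact rena_sb_mem_iter_of_leftInc hf hfL hfFL
      (isPathEdge_foldU_foldV c ⟨by omega, hi.2⟩).bounds.1 _
  · rw [rena_rena_sb, foldHom_cwVB, foldHom_comp_inl]
    exact rena_sb_mem_iter_of_rightInc huv hf hfR hfFR (by split_ifs <;> omega) _
  · rw [rena_rena_sb, foldHom_cwV (hgood c hc), foldHom_comp_inl]
    exact rena_sb_mem_iter_of_rightInc huv hf hfR hfFR
      (isPathEdge_foldU_foldV c ⟨hi.1, by omega⟩).bounds.2 _
  · have hg' := rena_mem_copyEdge (foldHom n A' B') hg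
    rw [foldHom_cwU hn, foldHom_cwV (hgood c hc), foldHom_comp_inl] at hg'
    exact copyEdge_subset_iter (isPathEdge_foldU_foldV c hi) hg'
  · have hg' := rena_mem_copyEdge (foldHom n A' B') hg
    rw [foldHom_cwU hn, foldHom_cwV (hgood c hc), foldHom_comp_inl] at hg'
    exact copyEdge_subset_iter (isPathEdge_foldU_succ_foldV c hi) hg'

/-- In the PP2DNF coding of a connected bipartite graph `(A,B,C)`
relative to `I`, non-leaf edge `(u,v)`, incident pair `(FL,FR)` and `n ≥ 1`: if
`ω = (A',B')` is a bad possible world (no kept `a ∈ A'` is adjacent to a kept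
`b ∈ B'`), then `φ(ω)` has a homomorphism to the iterate `I^{3n-1}_{e,Π}`. -/
theorem ppCoding_bad_world_hom_to_iterate {σ V α β : Type}
    (I : Inst σ V) (u v : V) (FL FR : σ × V × V)
    (hE : NonLeafEdge I u v) (hPi : IncidentPair I u v FL FR)
    (n : ℕ) (hn : 1 ≤ n)
    (A : Finset α) (B : Finset β) (C : Finset (α × β))
    (hC : C ⊆ A ×ˢ B) (hconn : BipConn A B C)
    (A' : Finset α) (B' : Finset β) (hA' : A' ⊆ A) (hB' : B' ⊆ B)
    (hbad : ∀ a ∈ A', ∀ b ∈ B', (a, b) ∉ C) :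
    ∃ h : CWt V α β → (V ⊕ Bool × ℕ),
      IsHom h (ppCoding I u v FL FR n A B C A' B') (iter I u v FL FR (3 * n - 1)) :=
  ppCoding_bad_world_hom_to_iterate_general I u v FL FR hE hPi n hn A B C A' B' hbad
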